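/- arXiv:1501.01751 — 2 statements merged into one kernel-verified Lean document; each statement's English description precedes it below -/
import Mathlib

section
/- Let π: X → Y be a 1-block factor code on a 1-step SFT X. Let y ∈ Y be a recurrent point (there is a sequence n_k → ∞ with σ^{n_k}(y) → y) with at least c transition classes over it. Then there exists a tuple (x¹, …, x^c) ∈ X^c with π(x¹) = ⋯ = π(x^c) = y such that for all 1 ≤ k < l ≤ c and all integers a ≤ b, there is no bi-transition between the words x^k_{[a,b]} and x^l_{[a,b]}; in particular the points x¹, …, x^c lie in c pairwise distinct transition classes over y. -/
open MeasureTheory Set Filter Topology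
open scoped ENNReal NNReal

/-- The shift map on the full shift `A^ℤ`. -/
def shiftMap {A : Type*} : (ℤ → A) → ℤ → A := fun x i => x (i + 1)

/-- The inverse shift map. -/
def shiftInvMap {A : Type*} : (ℤ → A) → ℤ → A := fun x i => x (i - 1)

/-- The coordinatewise shift on `n`-tuples of points of the full shift. -/
def prodShift {A : Type*} {n : ℕ} : (Fin n → ℤ → A) → Fin n → ℤ → A :=
  fun x i => shiftMap (x i)

/-- A map between full shifts is a sliding block code if it is given by a local block map. -/
def IsSlidingBlockCode {A B : Type*} (π : (ℤ → A) → ℤ → B) : Prop :=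
  ∃ (r : ℕ) (Φ : (Fin (2 * r + 1) → A) → B),
    ∀ x i, π x i = Φ fun j => x (i + (j : ℤ) - (r : ℤ))

/-- A subset of the full shift is a shift of finite type if it is the set of points
avoiding a (finite) set of forbidden words of some fixed length `N` (and is nonempty). -/
def IsSFT {A : Type*} (X : Set (ℤ → A)) : Prop :=
  X.Nonempty ∧ ∃ (N : ℕ) (F : Set (Fin N → A)),
    X = {x | ∀ k : ℤ, (fun i : Fin N => x (k + (i : ℤ))) ∉ F}

/-- A sofic shift: the image of an SFT under a sliding block code. -/
def IsSofic {A : Type*} (X : Set (ℤ → A)) : Prop :=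
  ∃ (m : ℕ) (Z : Set (ℤ → Fin m)) (φ : (ℤ → Fin m) → ℤ → A),
    IsSFT Z ∧ IsSlidingBlockCode φ ∧ φ '' Z = X

/-- A word occurs in the shift space `X`. -/
def WordIn {A : Type*} (X : Set (ℤ → A)) {n : ℕ} (w : Fin n → A) : Prop :=
  ∃ x ∈ X, ∃ k : ℤ, ∀ i : Fin n, x (k + (i : ℤ)) = w i

/-- Irreducibility: any two words occurring in `X` can be seen in a single point of `X`,
with the first strictly to the left of the second (equivalently, `u w v` occurs in `X`). -/
def IsIrreducibleShift {A : Type*} (X : Set (ℤ → A)) : Prop :=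
  ∀ {m n : ℕ} (u : Fin m → A) (v : Fin n → A), WordIn X u → WordIn X v →
    ∃ x ∈ X, ∃ i j : ℤ, i + (m : ℤ) ≤ j ∧ (∀ a : Fin m, x (i + (a : ℤ)) = u a) ∧
      ∀ b : Fin n, x (j + (b : ℤ)) = v b

/-- `π` is a factor code from `X` onto `Y`: a sliding block code mapping `X` onto `Y`. -/
def IsFactorCodeOn {A B : Type*} (π : (ℤ → A) → ℤ → B) (X : Set (ℤ → A))
    (Y : Set (ℤ → B)) : Prop :=
  IsSlidingBlockCode π ∧ π '' X = Y

/-- A point of `Y` is doubly transitive if its forward and backward orbits are dense in `Y`. -/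
def DoublyTransitiveIn {B : Type*} [TopologicalSpace B] (Y : Set (ℤ → B)) (y : ℤ → B) : Prop :=
  y ∈ Y ∧ Y ⊆ closure {z | ∃ n : ℕ, z = shiftMap^[n] y} ∧
    Y ⊆ closure {z | ∃ n : ℕ, z = shiftInvMap^[n] y}

/-- The measure `μ` has full topological support on the shift space `X`:
every open set meeting `X` has positive measure. -/
def FullSupportOn {A : Type*} [TopologicalSpace A] [MeasurableSpace A]
    (μ : Measure (ℤ → A)) (X : Set (ℤ → A)) : Prop :=
  ∀ U : Set (ℤ → A), IsOpen U → (U ∩ X).Nonempty → 0 < μ U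

/-- An `n`-fold `π`-relative joining supported on tuples from `X` with equal `π`-images. -/
def IsRelJoining {A B : Type*} [MeasurableSpace A] (X : Set (ℤ → A))
    (π : (ℤ → A) → ℤ → B) {n : ℕ} (lam : Measure (Fin n → ℤ → A)) : Prop :=
  IsProbabilityMeasure lam ∧ MeasurePreserving prodShift lam lam ∧
    lam {x | (∀ i, x i ∈ X) ∧ ∀ i j, π (x i) = π (x j)} = 1

/-- A relative joining over `ν`: all the `π`-images of the marginals are `ν`. -/
def IsRelJoiningOver {A B : Type*} [MeasurableSpace A] [MeasurableSpace B]
    (X : Set (ℤ → A)) (π : (ℤ → A) → ℤ → B) (ν : Measure (ℤ → B)) {n : ℕ}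
    (lam : Measure (Fin n → ℤ → A)) : Prop :=
  IsRelJoining X π lam ∧ ∀ i : Fin n, lam.map (fun x => π (x i)) = ν

/-- A relative joining is separating if a.e. tuple has pairwise distinct coordinates. -/
def IsSeparating {A : Type*} [MeasurableSpace A] {n : ℕ}
    (lam : Measure (Fin n → ℤ → A)) : Prop :=
  lam {x | ∀ i j : Fin n, i ≠ j → x i ≠ x j} = 1

/-- A degree joining over `ν`: an ergodic `d`-fold separating relative joining over `ν`. -/
def IsDegreeJoining {A B : Type*} [MeasurableSpace A] [MeasurableSpace B]
    (X : Set (ℤ → A)) (π : (ℤ → A) → ℤ → B) (ν : Measure (ℤ → B)) (d : ℕ)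
    (lam : Measure (Fin d → ℤ → A)) : Prop :=
  Ergodic prodShift lam ∧ IsRelJoiningOver X π ν lam ∧ IsSeparating lam

/-- `x` is a generic point for the invariant measure `μ`: ergodic averages of every
continuous function converge to the integral. -/
def GenericFor {A : Type*} [TopologicalSpace A] [MeasurableSpace A] (x : ℤ → A)
    (μ : Measure (ℤ → A)) : Prop :=
  ∀ f : C(ℤ → A, ℝ),
    Tendsto (fun n : ℕ => (∑ k ∈ Finset.range n, f (shiftMap^[k] x)) / (n : ℝ))
      atTop (𝓝 (∫ z, f z ∂μ))

/-- The 1-block code on full shifts induced by a symbol map `φ : A → B`. -/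
def oneBlock {A B : Type*} (φ : A → B) : (ℤ → A) → ℤ → B := fun x i => φ (x i)

/-- `x` reaches `x'` within the fiber of `π` over `y`: for every `n` there are `m ≥ n` and a
point `z` of `X` in the fiber over `y` agreeing with `x` on `(-∞, n]` and with `x'` on
`[m, ∞)`. -/
def Reaches {A B : Type*} (X : Set (ℤ → A)) (π : (ℤ → A) → ℤ → B) (y : ℤ → B)
    (x x' : ℤ → A) : Prop :=
  ∀ n : ℤ, ∃ m : ℤ, n ≤ m ∧ ∃ z ∈ X, π z = y ∧
    (∀ i : ℤ, i ≤ n → z i = x i) ∧ ∀ i : ℤ, m ≤ i → z i = x' i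

/-- `x` and `x'` are in the same transition class over `y`. -/
def SameTransClass {A B : Type*} (X : Set (ℤ → A)) (π : (ℤ → A) → ℤ → B) (y : ℤ → B)
    (x x' : ℤ → A) : Prop :=
  Reaches X π y x x' ∧ Reaches X π y x' x

/-- A bi-transition between the blocks of `x` and `x'` on the interval `[a, b]`
(for points `x, x'` with equal `π`-images there): a pair of `X`-words over `[a, b]`
(witnessed by points `z, z'` of `X`) with the same image under the 1-block code of `φ`,
such that `z` starts like `x` and ends like `x'`, while `z'` starts like `x'` and ends
like `x`. -/
def BiTransitionOn {A B : Type*} (X : Set (ℤ → A)) (φ : A → B) (x x' : ℤ → A)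
    (a b : ℤ) : Prop :=
  ∃ z ∈ X, ∃ z' ∈ X,
    (∀ i : ℤ, a ≤ i → i ≤ b → φ (z i) = φ (x i) ∧ φ (z' i) = φ (x i)) ∧
    z a = x a ∧ z b = x' b ∧ z' a = x' a ∧ z' b = x b

section Helpers

variable {A B : Type*}

lemma shiftMap_iterate (n : ℕ) (x : ℤ → A) (j : ℤ) :
    shiftMap^[n] x j = x (j + n) := by
  induction n generalizing x j with
  | zero => simp
  | succ n ih =>
    rw [Function.iterate_succ_apply, ih]
    show x (j + n + 1) = x (j + (n + 1 : ℕ))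
    congr 1
    push_cast
    ring

lemma habs_helper (m : ℤ) (L : ℕ) (h : m.natAbs ≤ L) : |m| ≤ (L : ℤ) := by
  rw [Int.abs_eq_natAbs]; exact_mod_cast h

/-- Gluing along a 1-step SFT. -/
lemma glue_mem {E : Set (A × A)} {X : Set (ℤ → A)}
    (hX : X = {x | ∀ i : ℤ, (x i, x (i + 1)) ∈ E})
    {φ : A → B} {y : ℤ → B} {x₁ x₂ z : ℤ → A} {a b : ℤ}
    (hx₁ : x₁ ∈ X) (hx₂ : x₂ ∈ X) (hz : z ∈ X)
    (hy₁ : oneBlock φ x₁ = y) (hy₂ : oneBlock φ x₂ = y)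
    (hab : a ≤ b)
    (hmid : ∀ i : ℤ, a ≤ i → i ≤ b → φ (z i) = y i)
    (hza : z a = x₁ a) (hzb : z b = x₂ b) :
    ∃ w ∈ X, oneBlock φ w = y ∧ (∀ i : ℤ, i ≤ a → w i = x₁ i) ∧
      (∀ i : ℤ, b ≤ i → w i = x₂ i) := by
  set w : ℤ → A := fun i => if i < a then x₁ i else if i ≤ b then z i else x₂ i with hw
  have hwle : ∀ i : ℤ, i ≤ a → w i = x₁ i := by
    intro i hi
    rcases lt_or_eq_of_le hi with h | h
    · simp [hw, h]
    · subst h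
      simp only [hw, lt_irrefl, if_false, if_pos hab]
      exact hza
  have hwmid : ∀ i : ℤ, a ≤ i → i ≤ b → w i = z i := by
    intro i h1 h2
    simp [hw, not_lt.mpr h1, h2]
  have hwge : ∀ i : ℤ, b ≤ i → w i = x₂ i := by
    intro i hi
    rcases lt_or_eq_of_le hi with h | h
    · simp [hw, not_lt.mpr (le_trans hab hi), not_le.mpr h]
    · subst h
      simp only [hw, not_lt.mpr hab, if_false, le_refl, if_true]
      exact hzb
  refine ⟨w, ?_, ?_, hwle, hwge⟩
  · rw [hX] at hx₁ hx₂ hz ⊢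
    intro i
    rcases le_or_gt (i + 1) a with h1 | h1
    · rw [hwle i (by omega), hwle (i + 1) h1]
      exact hx₁ i
    · rcases le_or_gt b i with h2 | h2
      · rw [hwge i h2, hwge (i + 1) (by omega)]
        exact hx₂ i
      · rw [hwmid i (by omega) (by omega), hwmid (i + 1) (by omega) (by omega)]
        exact hz i
  · funext i
    show φ (w i) = y i
    rcases le_or_gt i a with h1 | h1
    · rw [hwle i h1]
      exact congrFun hy₁ i
    · rcases le_or_gt i b with h2 | h2
      · rw [hwmid i (le_of_lt h1) h2]
        exact hmid i (le_of_lt h1) h2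
      · rw [hwge i (le_of_lt h2)]
        exact congrFun hy₂ i

/-- If `x` and `x'` are in different transition classes, then far enough to the right
there is no bi-transition between their blocks. -/
lemma no_far_biTransition {E : Set (A × A)} {X : Set (ℤ → A)}
    (hX : X = {x | ∀ i : ℤ, (x i, x (i + 1)) ∈ E})
    {φ : A → B} {y : ℤ → B} {x x' : ℤ → A}
    (hx : x ∈ X) (hx' : x' ∈ X) (hyx : oneBlock φ x = y) (hyx' : oneBlock φ x' = y)
    (hns : ¬ SameTransClass X (oneBlock φ) y x x') :
    ∃ n₀ : ℤ, ∀ a b : ℤ, n₀ ≤ a → a ≤ b → ¬ BiTransitionOn X φ x x' a b := by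
  rw [SameTransClass, not_and_or] at hns
  rcases hns with h | h
  · rw [Reaches] at h
    push_neg at h
    obtain ⟨n, hn⟩ := h
    refine ⟨n, fun a b ha hab hbt => ?_⟩
    obtain ⟨z, hzX, z', hz'X, hφz, hza, hzb, hz'a, hz'b⟩ := hbt
    obtain ⟨w, hwX, hwy, hwl, hwr⟩ := glue_mem hX hx hx' hzX hyx hyx' hab
      (fun i h1 h2 => by rw [(hφz i h1 h2).1]; exact congrFun hyx i) hza hzb
    obtain ⟨i, hi1, hi2⟩ := hn b (le_trans ha hab) w hwX hwy
      (fun i hi => hwl i (le_trans hi ha))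
    exact hi2 (hwr i hi1)
  · rw [Reaches] at h
    push_neg at h
    obtain ⟨n, hn⟩ := h
    refine ⟨n, fun a b ha hab hbt => ?_⟩
    obtain ⟨z, hzX, z', hz'X, hφz, hza, hzb, hz'a, hz'b⟩ := hbt
    obtain ⟨w, hwX, hwy, hwl, hwr⟩ := glue_mem hX hx' hx hz'X hyx' hyx hab
      (fun i h1 h2 => by rw [(hφz i h1 h2).2]; exact congrFun hyx i) hz'a hz'b
    obtain ⟨i, hi1, hi2⟩ := hn b (le_trans ha hab) w hwX hwy
      (fun i hi => hwl i (le_trans hi ha))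
    exact hi2 (hwr i hi1)

/-- Same transition class gives a bi-transition on a suitable interval. -/
lemma biTransition_of_same {X : Set (ℤ → A)} {φ : A → B} {y : ℤ → B} {x x' : ℤ → A}
    (hyx : oneBlock φ x = y)
    (hs : SameTransClass X (oneBlock φ) y x x') :
    ∃ b : ℤ, 0 ≤ b ∧ BiTransitionOn X φ x x' 0 b := by
  obtain ⟨h1, h2⟩ := hs
  obtain ⟨m, hm0, z, hzX, hzy, hzl, hzr⟩ := h1 0
  obtain ⟨m', hm'0, z', hz'X, hz'y, hz'l, hz'r⟩ := h2 0
  refine ⟨max m m', le_trans hm0 (le_max_left _ _), z, hzX, z', hz'X, ?_, ?_, ?_, ?_, ?_⟩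
  · intro i _ _
    constructor
    · exact (congrFun hzy i).trans (congrFun hyx i).symm
    · exact (congrFun hz'y i).trans (congrFun hyx i).symm
  · exact hzl 0 le_rfl
  · exact hzr _ (le_max_left _ _)
  · exact hz'l 0 le_rfl
  · exact hz'r _ (le_max_right _ _)

/-- Bi-transitions transport along shifts. -/
lemma biTransition_shift {E : Set (A × A)} {X : Set (ℤ → A)}
    (hX : X = {x | ∀ i : ℤ, (x i, x (i + 1)) ∈ E}) {φ : A → B}
    {u u' v v' : ℤ → A} {a b q : ℤ}
    (h1 : ∀ i : ℤ, a ≤ i → i ≤ b → u i = v (i + q))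
    (h2 : ∀ i : ℤ, a ≤ i → i ≤ b → u' i = v' (i + q))
    (hbt : BiTransitionOn X φ u u' a b) (hab : a ≤ b) :
    BiTransitionOn X φ v v' (a + q) (b + q) := by
  obtain ⟨z, hz, z', hz', hφz, hza, hzb, hz'a, hz'b⟩ := hbt
  have hshift : ∀ t : ℤ → A, t ∈ X → (fun j => t (j - q)) ∈ X := by
    intro t ht
    rw [hX] at ht ⊢
    intro i
    have e : i + 1 - q = (i - q) + 1 := by ring
    show (t (i - q), t (i + 1 - q)) ∈ E
    rw [e]
    exact ht (i - q)
  refine ⟨fun j => z (j - q), hshift z hz, fun j => z' (j - q), hshift z' hz', ?_, ?_, ?_, ?_, ?_⟩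
  · intro i hi1 hi2
    have ha' : a ≤ i - q := by omega
    have hb' : i - q ≤ b := by omega
    have e : i - q + q = i := by ring
    constructor
    · show φ (z (i - q)) = φ (v i)
      rw [(hφz _ ha' hb').1, h1 _ ha' hb', e]
    · show φ (z' (i - q)) = φ (v i)
      rw [(hφz _ ha' hb').2, h1 _ ha' hb', e]
  · show z (a + q - q) = v (a + q)
    rw [show a + q - q = a by ring, hza, h1 a le_rfl hab]
  · show z (b + q - q) = v' (b + q)
    rw [show b + q - q = b by ring, hzb, h2 b hab le_rfl]
  · show z' (a + q - q) = v' (a + q)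
    rw [show a + q - q = a by ring, hz'a, h2 a le_rfl hab]
  · show z' (b + q - q) = v (b + q)
    rw [show b + q - q = b by ring, hz'b, h1 b hab le_rfl]

lemma isOpen_agree {C : Type*} [TopologicalSpace C] [DiscreteTopology C]
    (y : ℤ → C) (L : ℕ) :
    IsOpen {z : ℤ → C | ∀ j : ℤ, |j| ≤ (L : ℤ) → z j = y j} := by
  have heq : {z : ℤ → C | ∀ j : ℤ, |j| ≤ (L : ℤ) → z j = y j}
      = ⋂ j ∈ Finset.Icc (-(L : ℤ)) (L : ℤ), (fun z : ℤ → C => z j) ⁻¹' {y j} := by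
    ext z
    simp only [Set.mem_setOf_eq, Set.mem_iInter, Set.mem_preimage, Set.mem_singleton_iff,
      Finset.mem_Icc, abs_le]
  rw [heq]
  exact isOpen_biInter_finset fun j _ =>
    (isOpen_discrete {y j}).preimage (continuous_apply j)

lemma isOpen_agree_tuple [TopologicalSpace A] [DiscreteTopology A] {c : ℕ}
    (x : Fin c → ℤ → A) (L : ℕ) :
    IsOpen {t : Fin c → ℤ → A | ∀ i (j : ℤ), |j| ≤ (L : ℤ) → t i j = x i j} := by
  have heq : {t : Fin c → ℤ → A | ∀ i (j : ℤ), |j| ≤ (L : ℤ) → t i j = x i j}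
      = ⋂ i : Fin c, ⋂ j ∈ Finset.Icc (-(L : ℤ)) (L : ℤ),
          (fun t : Fin c → ℤ → A => t i j) ⁻¹' {x i j} := by
    ext t
    simp only [Set.mem_setOf_eq, Set.mem_iInter, Set.mem_preimage, Set.mem_singleton_iff,
      Finset.mem_Icc, abs_le]
  rw [heq]
  exact isOpen_iInter_of_finite fun i => isOpen_biInter_finset fun j _ =>
    (isOpen_discrete {x i j}).preimage ((continuous_apply j).comp (continuous_apply i))

end Helpers

/-- Let `π` be a 1-block factor code on a 1-step SFT `X` and let `y` be a
recurrent point with at least `c` transition classes over it. Then there is a tuple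
`(x¹, …, x^c)` in the fiber over `y` such that no bi-transition exists between the blocks
`x^k_{[a,b]}` and `x^l_{[a,b]}` for any `k < l` and any interval `[a, b]`; in particular
the `xⁱ` lie in `c` pairwise distinct transition classes over `y`. -/

theorem exists_bi_transition_free_tuple
    {A B : Type*} [Fintype A] [Fintype B]
    [TopologicalSpace A] [DiscreteTopology A]
    [TopologicalSpace B] [DiscreteTopology B]
    (E : Set (A × A)) (X : Set (ℤ → A))
    (hX : X = {x | ∀ i : ℤ, (x i, x (i + 1)) ∈ E}) (hXne : X.Nonempty)
    (φ : A → B) (y : ℤ → B) (hy : y ∈ oneBlock φ '' X)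
    (hrec : ∃ f : ℕ → ℕ, StrictMono f ∧
      Tendsto (fun k => shiftMap^[f k] y) atTop (nhds y))
    (c : ℕ)
    (hcls : ∃ reps : Fin c → ℤ → A, (∀ i, reps i ∈ X ∧ oneBlock φ (reps i) = y) ∧
      ∀ i j, i ≠ j → ¬ SameTransClass X (oneBlock φ) y (reps i) (reps j)) :
    ∃ xs : Fin c → ℤ → A, (∀ k, xs k ∈ X ∧ oneBlock φ (xs k) = y) ∧
      (∀ k l : Fin c, k < l → ∀ a b : ℤ, a ≤ b →
        ¬ BiTransitionOn X φ (xs k) (xs l) a b) ∧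
      ∀ k l : Fin c, k ≠ l → ¬ SameTransClass X (oneBlock φ) y (xs k) (xs l) := by
  classical
  obtain ⟨reps, hreps, hdist⟩ := hcls
  -- Step 1: a uniform bound `N` beyond which no bi-transitions exist between the reps.
  have hA : ∀ i j : Fin c, ∃ n₀ : ℤ, i ≠ j → ∀ a b : ℤ, n₀ ≤ a → a ≤ b →
      ¬ BiTransitionOn X φ (reps i) (reps j) a b := by
    intro i j
    by_cases hij : i = j
    · exact ⟨0, fun h => absurd hij h⟩
    · obtain ⟨n₀, hn₀⟩ := no_far_biTransition hX (hreps i).1 (hreps j).1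
        (hreps i).2 (hreps j).2 (hdist i j hij)
      exact ⟨n₀, fun _ => hn₀⟩
  choose g hg using hA
  set N : ℕ := Finset.univ.sup (fun pr : Fin c × Fin c => (g pr.1 pr.2).toNat) with hNdef
  have hN : ∀ i j : Fin c, i ≠ j → ∀ a b : ℤ, (N : ℤ) ≤ a → a ≤ b →
      ¬ BiTransitionOn X φ (reps i) (reps j) a b := by
    intro i j hij a b ha hab
    apply hg i j hij a b ?_ hab
    have h1 : (g i j).toNat ≤ N := Finset.le_sup (f := fun pr : Fin c × Fin c => (g pr.1 pr.2).toNat)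
      (Finset.mem_univ (i, j))
    omega
  -- Step 2: recurrence gives large shifts fixing large central blocks of `y`.
  obtain ⟨f, hf, hconv⟩ := hrec
  have hrec' : ∀ M : ℕ, ∃ q : ℕ, M ≤ q ∧ ∀ j : ℤ, |j| ≤ (M : ℤ) → y (j + (q : ℤ)) = y j := by
    intro M
    have hU := isOpen_agree y M
    have hyU : y ∈ {z : ℤ → B | ∀ j : ℤ, |j| ≤ (M : ℤ) → z j = y j} := fun j _ => rfl
    obtain ⟨k, hk1, hk2⟩ := ((hconv.eventually (hU.mem_nhds hyU)).and
      (eventually_ge_atTop M)).exists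
    refine ⟨f k, le_trans hk2 hf.le_apply, fun j hj => ?_⟩
    have := hk1 j hj
    rwa [shiftMap_iterate] at this
  choose p hp1 hp2 using hrec'
  -- Step 3: compactness, extract a limit tuple of the shifted representatives.
  set T : ℕ → (Fin c → ℤ → A) := fun M i j => reps i (j + (p M : ℤ)) with hT
  obtain ⟨xs, -, ψ, hψ, hlim⟩ := IsCompact.tendsto_subseq (isCompact_univ)
    (fun n => Set.mem_univ (T n))
  have key : ∀ L R : ℕ, ∃ q : ℕ, R ≤ q ∧ (∀ j : ℤ, |j| ≤ (L : ℤ) → y (j + (q : ℤ)) = y j) ∧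
      (∀ i (j : ℤ), |j| ≤ (L : ℤ) → reps i (j + (q : ℤ)) = xs i j) := by
    intro L R
    have hV := isOpen_agree_tuple xs L
    have hxsV : xs ∈ {t : Fin c → ℤ → A | ∀ i (j : ℤ), |j| ≤ (L : ℤ) → t i j = xs i j} :=
      fun i j _ => rfl
    obtain ⟨k, hk1, hk2⟩ := ((hlim.eventually (hV.mem_nhds hxsV)).and
      (eventually_ge_atTop (max L R))).exists
    have hkk : max L R ≤ ψ k := le_trans hk2 hψ.le_apply
    refine ⟨p (ψ k), le_trans (le_trans (le_max_right L R) hkk) (hp1 _), fun j hj => ?_,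
      fun i j hj => hk1 i j hj⟩
    refine hp2 (ψ k) j (le_trans hj ?_)
    exact_mod_cast le_trans (le_max_left L R) hkk
  -- Step 4: the limit tuple is in the fiber.
  have hxsX : ∀ i, xs i ∈ X := by
    intro i
    rw [hX]
    intro m
    obtain ⟨q, -, -, hq⟩ := key (m.natAbs + 1) 0
    have h1 : xs i m = reps i (m + (q : ℤ)) :=
      (hq i m (habs_helper _ _ (by omega))).symm
    have h2 : xs i (m + 1) = reps i ((m + (q : ℤ)) + 1) := by
      rw [← hq i (m + 1) (habs_helper _ _ (by omega))]
      congr 1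
      ring
    rw [h1, h2]
    have hri := (hreps i).1
    rw [hX] at hri
    exact hri (m + q)
  have hxsy : ∀ i, oneBlock φ (xs i) = y := by
    intro i
    funext j
    obtain ⟨q, -, hqy, hq⟩ := key j.natAbs 0
    show φ (xs i j) = y j
    rw [← hq i j (habs_helper _ _ le_rfl)]
    exact (congrFun (hreps i).2 (j + (q : ℤ))).trans (hqy j (habs_helper _ _ le_rfl))
  -- Step 5: no bi-transitions between distinct coordinates of the limit tuple.
  have hbtfree : ∀ k l : Fin c, k ≠ l → ∀ a b : ℤ, a ≤ b →
      ¬ BiTransitionOn X φ (xs k) (xs l) a b := by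
    intro k l hkl a b hab hbt
    set L : ℕ := max a.natAbs b.natAbs with hL
    obtain ⟨q, hqR, -, hq⟩ := key L ((N : ℤ) - a).toNat
    have hL1 : a.natAbs ≤ L := le_max_left _ _
    have hL2 : b.natAbs ≤ L := le_max_right _ _
    have hmem : ∀ i : ℤ, a ≤ i → i ≤ b → |i| ≤ (L : ℤ) := by
      intro i hi1 hi2
      rw [abs_le]
      omega
    have h1 : ∀ i : ℤ, a ≤ i → i ≤ b → xs k i = reps k (i + (q : ℤ)) :=
      fun i hi1 hi2 => (hq k i (hmem i hi1 hi2)).symm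
    have h2 : ∀ i : ℤ, a ≤ i → i ≤ b → xs l i = reps l (i + (q : ℤ)) :=
      fun i hi1 hi2 => (hq l i (hmem i hi1 hi2)).symm
    have hbt' := biTransition_shift hX h1 h2 hbt hab
    exact hN k l hkl (a + q) (b + q) (by omega) (by omega) hbt'
  refine ⟨xs, fun k => ⟨hxsX k, hxsy k⟩,
    fun k l hkl a b hab => hbtfree k l (ne_of_lt hkl) a b hab, ?_⟩
  intro k l hkl hs
  obtain ⟨b, hb, hbt⟩ := biTransition_of_same (hxsy k) hs
  exact hbtfree k l hkl 0 b hb hbt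
end

section
/- Let c ∈ ℕ and let Q be a probability measure on {1,…,c}^c such that Q gives full measure to the set of tuples (x₁,…,x_c) with pairwise distinct entries, and such that for each 1 ≤ i < j ≤ c the coordinate marginals p_i Q and p_j Q are either equal or mutually singular. Let P₁, …, P_k be the distinct coordinate marginals of Q, and for each 1 ≤ r ≤ k set I_r = {i : P_r({i}) > 0} and J_r = {i : p_i Q = P_r}. Then I₁, …, I_k form a partition of {1,…,c}, |I_r| = |J_r| for each r, each P_r is the uniform distribution on I_r, and for every atom (x₁,…,x_c) of Q and every r, the set {x_j : j ∈ J_r} equals I_r. -/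
open MeasureTheory Set Filter
open scoped ENNReal

/-! Since `Q`-almost every tuple is a bijection of `{1,…,c}`, every point `a` is hit by exactly
one coordinate, so `∑ i, p_i Q {a} = 1`. If `a` is an atom of `P_r`, mutual singularity kills
every marginal other than `P_r` at `a`, hence `|J_r| · P_r {a} = 1`: `P_r` is uniform, with
`|I_r| = |J_r|` because it has total mass one. An atom `x` of `Q` is injective and maps `J_r`
into `I_r`, so the two sets of equal size are equal. -/

theorem MeasureTheory.Measure.MutuallySingular.measure_singleton_eq_zero_or {α : Type*}
    [MeasurableSpace α] {μ ν : Measure α} (h : μ ⟂ₘ ν) (a : α) :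
    μ {a} = 0 ∨ ν {a} = 0 := by
  obtain ⟨t, -, hμt, hνt⟩ := h
  by_cases ha : a ∈ t
  · exact .inl (measure_mono_null (singleton_subset_iff.2 ha) hμt)
  · exact .inr (measure_mono_null (singleton_subset_iff.2 ha) hνt)

theorem MeasureTheory.Measure.map_singleton_pos {α β : Type*} [MeasurableSpace α]
    [MeasurableSpace β] {μ : Measure α} {f : α → β} (hf : Measurable f) {x : α}
    (hx : 0 < μ {x}) : 0 < μ.map f {f x} :=
  hx.trans_le <| (measure_mono fun _ hy => congrArg f (mem_singleton_iff.1 hy)).trans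
    (Measure.le_map_apply hf.aemeasurable _)

theorem sum_map_eval_singleton_of_ae_injective {α : Type*} [Fintype α] [MeasurableSpace α]
    [MeasurableSingletonClass α] {Q : Measure (α → α)}
    (hQ : ∀ᵐ x ∂Q, Function.Injective x) (a : α) :
    ∑ i, Q.map (fun x => x i) {a} = Q univ := by
  have hnull : Q {x | ¬Function.Injective x} = 0 := ae_iff.1 hQ
  have hmeas (i : α) : MeasurableSet {x : α → α | x i = a} :=
    measurableSet_eq_fun (measurable_pi_apply i) measurable_const
  have hdisj : Pairwise (Function.onFun (AEDisjoint Q) fun i => {x : α → α | x i = a}) :=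
    fun i j hij => measure_mono_null
      (fun x hx (hx_inj : Function.Injective x) => hij (hx_inj (hx.1.trans hx.2.symm))) hnull
  have hcover : (⋃ i, {x : α → α | x i = a}) =ᵐ[Q] univ := by
    refine ae_eq_univ.2 <|
      measure_mono_null (fun x hx (hx_inj : Function.Injective x) => hx ?_) hnull
    obtain ⟨i, hi⟩ := Finite.surjective_of_injective hx_inj a
    exact mem_iUnion.2 ⟨i, hi⟩
  calc ∑ i, Q.map (fun x => x i) {a} = ∑ i, Q {x | x i = a} :=
        Finset.sum_congr rfl fun i _ => Measure.map_apply (measurable_pi_apply i)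
          (measurableSet_singleton a)
    _ = Q (⋃ i, {x : α → α | x i = a}) :=
        (tsum_fintype _).symm.trans
          (measure_iUnion₀ hdisj fun i => (hmeas i).nullMeasurableSet).symm
    _ = Q univ := measure_congr hcover

section SingularOrEqual

variable {ι α : Type*} [Fintype ι] [MeasurableSpace α] {μ : ι → Measure α}

theorem ncard_mul_measure_singleton_eq_one (hsum : ∀ a, ∑ i, μ i {a} = 1)
    (hsing : ∀ i j, μ i = μ j ∨ μ i ⟂ₘ μ j) {i : ι} {a : α} (ha : 0 < μ i {a}) :
    ({j | μ j = μ i}.ncard : ℝ≥0∞) * μ i {a} = 1 := by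
  classical
  rw [← hsum a, ncard_eq_toFinset_card', toFinset_ofPred, ← nsmul_eq_mul, ← Finset.sum_const,
    Finset.sum_filter]
  refine Finset.sum_congr rfl fun j _ => ?_
  split_ifs with hj
  · rw [hj]
  · exact ((((hsing j i).resolve_left hj).measure_singleton_eq_zero_or a).resolve_right
      ha.ne').symm

variable [Fintype α] [MeasurableSingletonClass α] [∀ i, IsProbabilityMeasure (μ i)]

theorem ncard_support_eq_ncard_class (hsum : ∀ a, ∑ i, μ i {a} = 1)
    (hsing : ∀ i j, μ i = μ j ∨ μ i ⟂ₘ μ j) (i : ι) :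
    {a | 0 < μ i {a}}.ncard = {j | μ j = μ i}.ncard := by
  classical
  set n := {j | μ j = μ i}.ncard
  suffices ({a | 0 < μ i {a}}.ncard : ℝ≥0∞) = n by exact_mod_cast this
  calc ({a | 0 < μ i {a}}.ncard : ℝ≥0∞)
      = ∑ a, if 0 < μ i {a} then 1 else 0 := by
        rw [Finset.sum_boole, ncard_eq_toFinset_card', toFinset_ofPred]
    _ = ∑ a, n * μ i {a} := by
        refine Finset.sum_congr rfl fun a _ => ?_
        split_ifs with ha
        · exact (ncard_mul_measure_singleton_eq_one hsum hsing ha).symm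
        · rw [nonpos_iff_eq_zero.1 (not_lt.1 ha), mul_zero]
    _ = n := by
        rw [← Finset.mul_sum, sum_measure_singleton, Finset.coe_univ, measure_univ, mul_one]

theorem measure_singleton_eq_inv_ncard_support (hsum : ∀ a, ∑ i, μ i {a} = 1)
    (hsing : ∀ i j, μ i = μ j ∨ μ i ⟂ₘ μ j) {i : ι} {a : α} (ha : 0 < μ i {a}) :
    μ i {a} = ({b | 0 < μ i {b}}.ncard : ℝ≥0∞)⁻¹ := by
  rw [ncard_support_eq_ncard_class hsum hsing i]
  exact ENNReal.eq_inv_of_mul_eq_one_left <| by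
    rw [mul_comm]; exact ncard_mul_measure_singleton_eq_one hsum hsing ha

end SingularOrEqual

/-- Let `Q` be a probability measure on `{1,…,c}^c` concentrated on
injective tuples, whose coordinate marginals are pairwise either equal or mutually
singular. Let `P 1, …, P k` be the distinct marginals, `I r` the support of `P r` and
`J r` the set of coordinates whose marginal is `P r`. Then the `I r` partition
`{1,…,c}`, `|I r| = |J r|`, each `P r` is uniform on `I r`, and every atom of `Q` maps
`J r` onto `I r`. -/
theorem marginal_partition_of_singular_or_equal
    (c : ℕ) (Q : Measure (Fin c → Fin c)) [IsProbabilityMeasure Q]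
    (hinj : Q {x | Function.Injective x} = 1)
    (hsing : ∀ i j : Fin c, Q.map (fun x => x i) = Q.map (fun x => x j) ∨
      (Q.map (fun x => x i)).MutuallySingular (Q.map (fun x => x j)))
    (k : ℕ) (P : Fin k → Measure (Fin c)) (hPinj : Function.Injective P)
    (hPmarg : ∀ r : Fin k, ∃ i : Fin c, Q.map (fun x => x i) = P r)
    (hmargP : ∀ i : Fin c, ∃ r : Fin k, Q.map (fun x => x i) = P r)
    (I J : Fin k → Set (Fin c))
    (hI : ∀ r, I r = {i | 0 < P r {i}})
    (hJ : ∀ r, J r = {i | Q.map (fun x => x i) = P r}) :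
    (Pairwise (Function.onFun Disjoint I) ∧ ⋃ r, I r = Set.univ) ∧
    (∀ r, (I r).ncard = (J r).ncard) ∧
    (∀ r, (∀ i ∈ I r, P r {i} = ((I r).ncard : ℝ≥0∞)⁻¹) ∧
      ∀ i ∉ I r, P r {i} = 0) ∧
    ∀ x : Fin c → Fin c, 0 < Q {x} → ∀ r, x '' J r = I r := by
  have hae : ∀ᵐ x ∂Q, Function.Injective x :=
    ae_iff.2 ((prob_compl_eq_zero_iff (toFinite _).measurableSet).2 hinj)
  have hsum (a : Fin c) : ∑ i, Q.map (fun x => x i) {a} = 1 := by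
    rw [sum_map_eval_singleton_of_ae_injective hae, measure_univ]
  have hprob (i : Fin c) : IsProbabilityMeasure (Q.map fun x => x i) :=
    Measure.isProbabilityMeasure_map (measurable_pi_apply i).aemeasurable
  choose i hi using hPmarg
  obtain rfl : P = fun r => Q.map fun x => x (i r) := funext fun r => (hi r).symm
  obtain rfl := funext hI
  obtain rfl := funext hJ
  refine ⟨⟨fun r s hrs => disjoint_left.2 fun a har has => ?_, eq_univ_of_forall fun a => ?_⟩,
    fun r => ncard_support_eq_ncard_class hsum hsing (i r),
    fun r => ⟨fun a => measure_singleton_eq_inv_ncard_support hsum hsing,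
      fun a ha => nonpos_iff_eq_zero.1 (not_lt.1 ha)⟩, fun x hx r => ?_⟩
  · exact (((hsing _ _).resolve_left (hPinj.ne hrs)).measure_singleton_eq_zero_or a).elim
      har.ne' has.ne'
  · obtain ⟨j, -, hj⟩ := Finset.exists_ne_zero_of_sum_ne_zero ((hsum a).symm ▸ one_ne_zero)
    obtain ⟨r, hr⟩ := hmargP j
    exact mem_iUnion.2 ⟨r, (hr ▸ pos_iff_ne_zero.2 hj : _)⟩
  · have hx_inj : Function.Injective x := ae_iff_of_countable.1 hae x hx.ne'
    refine eq_of_subset_of_ncard_le ?_ ?_ (toFinite _)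
    · rintro _ ⟨j, hj, rfl⟩
      simp only [mem_ofPred_eq] at hj ⊢
      rw [← hj]
      exact Measure.map_singleton_pos (measurable_pi_apply j) hx
    · rw [ncard_image_of_injective _ hx_inj, ncard_support_eq_ncard_class hsum hsing]
end
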